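/- arXiv:2301.06651 — 6 statements merged into one kernel-verified Lean document; each statement's English description precedes it below -/
import Mathlib

section
/- If ω, k are complex numbers with Im ω > |Im k|, then there exists a real number v with |v| < 1 such that, setting γ = (1 - v²)^(-1/2), ω' = γ(ω - v k) and k' = γ(k - v ω), we have Im k' = 0 and Im ω' > 0. -/
theorem boost_to_growing_fourier_mode (ω k : ℂ) (h : ω.im > |k.im|) :
    ∃ v : ℝ, |v| < 1 ∧
      (((Real.sqrt (1 - v ^ 2))⁻¹ : ℂ) * (k - (v : ℂ) * ω)).im = 0 ∧
      (((Real.sqrt (1 - v ^ 2))⁻¹ : ℂ) * (ω - (v : ℂ) * k)).im > 0 := by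
  have hω : 0 < ω.im := lt_of_le_of_lt (abs_nonneg _) h
  refine ⟨k.im / ω.im, ?_, ?_, ?_⟩
  · rw [abs_div, abs_of_pos hω, div_lt_one hω]; exact h
  · have : (k - ((k.im / ω.im : ℝ) : ℂ) * ω).im = 0 := by
      simp [Complex.sub_im, Complex.mul_im, div_mul_cancel₀, hω.ne']
    rw [Complex.mul_im, this]
    simp [Complex.sub_im, Complex.mul_im, div_mul_cancel₀, hω.ne']
  · have hv2 : 0 < 1 - (k.im / ω.im) ^ 2 := by
      have h1 : |k.im / ω.im| < 1 := by
        rw [abs_div, abs_of_pos hω, div_lt_one hω]; exact h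
      nlinarith [abs_nonneg (k.im / ω.im), sq_abs (k.im / ω.im)]
    have hs : 0 < (Real.sqrt (1 - (k.im / ω.im) ^ 2))⁻¹ :=
      inv_pos.2 (Real.sqrt_pos.2 hv2)
    have him : 0 < (ω - ((k.im / ω.im : ℝ) : ℂ) * k).im := by
      simp only [Complex.sub_im, Complex.mul_im, Complex.ofReal_re, Complex.ofReal_im]
      have : ω.im - k.im / ω.im * k.im = (ω.im ^ 2 - k.im ^ 2) / ω.im := by
        field_simp
      rw [show (0:ℝ) * k.re = 0 by ring, add_zero, this]
      apply div_pos _ hω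
      nlinarith [sq_abs k.im, abs_nonneg k.im]
    simpa [Complex.mul_im] using mul_pos hs him
end

section
/- Lorentz invariance of the inequality: for ω, k ∈ ℂ and v ∈ (-1,1), with ω' = γ(ω - v k), k' = γ(k - v ω), γ = 1/√(1-v²): Im ω ≤ |Im k| holds if and only if Im ω' ≤ |Im k'|. -/
lemma real_bound_iff (a b v : ℝ) (hv : -1 < v) (hv' : v < 1) :
    a ≤ |b| ↔ a - v * b ≤ |b - v * a| := by
  constructor
  · intro h
    rcases abs_cases b with ⟨hb, hb'⟩ | ⟨hb, hb'⟩ <;>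
      rcases abs_cases (b - v * a) with ⟨h2, h2'⟩ | ⟨h2, h2'⟩ <;> nlinarith
  · intro h
    rcases abs_cases (b - v * a) with ⟨h2, h2'⟩ | ⟨h2, h2'⟩ <;>
      rcases abs_cases b with ⟨hb, hb'⟩ | ⟨hb, hb'⟩ <;> nlinarith

theorem bound_is_lorentz_invariant (ω k : ℂ) (v : ℝ) (hv : -1 < v) (hv' : v < 1) :
    ω.im ≤ |k.im| ↔
      (((Real.sqrt (1 - v ^ 2))⁻¹ : ℂ) * (ω - (v : ℂ) * k)).im ≤
        |(((Real.sqrt (1 - v ^ 2))⁻¹ : ℂ) * (k - (v : ℂ) * ω)).im| := by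
  have hpos : 0 < (Real.sqrt (1 - v ^ 2))⁻¹ := by
    apply inv_pos.mpr
    apply Real.sqrt_pos.mpr
    nlinarith
  rw [← Complex.ofReal_inv]
  set g := (Real.sqrt (1 - v ^ 2))⁻¹ with hg
  have h1 : (((g : ℂ)) * (ω - (v : ℂ) * k)).im = g * (ω.im - v * k.im) := by
    simp [Complex.mul_im, Complex.sub_im, Complex.ofReal_im, Complex.ofReal_re]
  have h2 : (((g : ℂ)) * (k - (v : ℂ) * ω)).im = g * (k.im - v * ω.im) := by
    simp [Complex.mul_im, Complex.sub_im, Complex.ofReal_im, Complex.ofReal_re]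
  rw [h1, h2, abs_mul, abs_of_pos hpos]
  rw [mul_le_mul_iff_right₀ hpos]
  exact real_bound_iff ω.im k.im v hv hv'
end

section
/- Let c_s ∈ ℝ with 0 ≤ c_s ≤ 1. For every k ∈ ℝ, each of the four roots ω of the polynomial equation (ω² - k²)² - ω² + c_s² k² = 0 is real (equivalently, both values of ω² given by 2ω² = 1 + 2k² ± √(1 + 4k²(1 - c_s²)) are nonnegative reals). -/
theorem bludman_ruderman_subluminal_stable (cs : ℝ) (h0 : 0 ≤ cs) (h1 : cs ≤ 1)
    (k : ℝ) (ω : ℂ)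
    (hdisp : (ω ^ 2 - (k : ℂ) ^ 2) ^ 2 - ω ^ 2 + (cs : ℂ) ^ 2 * (k : ℂ) ^ 2 = 0) :
    ω.im = 0 := by
  have hre := congrArg Complex.re hdisp
  have him := congrArg Complex.im hdisp
  set a := ω.re with ha
  set b := ω.im with hb
  simp only [pow_two, Complex.mul_re, Complex.mul_im, Complex.sub_re, Complex.sub_im,
    Complex.add_re, Complex.add_im, Complex.ofReal_re, Complex.ofReal_im, Complex.zero_re,
    Complex.zero_im, ← ha, ← hb] at hre him
  ring_nf at hre him
  by_contra hbne
  have hb2 : 0 < b ^ 2 := by positivity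
  have hfac : a * b * (2 * a ^ 2 - 2 * b ^ 2 - 2 * k ^ 2 - 1) = 0 := by linarith [him]
  rcases mul_eq_zero.mp hfac with hab | hq
  · rcases mul_eq_zero.mp hab with haz | hbz
    · rw [haz] at hre
      ring_nf at hre
      nlinarith [sq_nonneg (cs * k), sq_nonneg (k^2), sq_nonneg (b^2), mul_nonneg (sq_nonneg b) (sq_nonneg k)]
    · exact hbne hbz
  · have hA : a ^ 2 = b ^ 2 + k ^ 2 + 1 / 2 := by linarith
    nlinarith [sq_nonneg (cs * k), mul_nonneg (sq_nonneg a) (sq_nonneg b),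
      mul_nonneg (mul_nonneg (sub_nonneg.mpr h1) (by linarith : (0:ℝ) ≤ cs + 1)) (sq_nonneg k)]
end

section
/- Let c_s ∈ ℝ with c_s² > 1. Then there exists a real k such that some root ω of (ω² - k²)² - ω² + c_s² k² = 0 has Im ω > 0. -/
theorem bludman_ruderman_superluminal_unstable (cs : ℝ) (h : cs ^ 2 > 1) :
    ∃ k : ℝ, ∃ ω : ℂ,
      (ω ^ 2 - (k : ℂ) ^ 2) ^ 2 - ω ^ 2 + (cs : ℂ) ^ 2 * (k : ℂ) ^ 2 = 0 ∧
      ω.im > 0 := by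
  set t : ℝ := cs ^ 2 - 1 with ht
  have ht0 : 0 < t := by simp only [ht]; linarith
  set k : ℝ := (Real.sqrt t)⁻¹ with hk
  have hst : Real.sqrt t ≠ 0 := by positivity
  have htc : (t : ℂ) ≠ 0 := by exact_mod_cast ht0.ne'
  have hk2 : (k : ℂ) ^ 2 = ((t⁻¹ : ℝ) : ℂ) := by
    norm_cast
    rw [hk, inv_pow, Real.sq_sqrt ht0.le]
  -- z = (2/t + 1)/2 + (√3/2) i
  set z : ℂ := ((1/2 + t⁻¹ : ℝ) : ℂ) + ((Real.sqrt 3 / 2 : ℝ) : ℂ) * Complex.I with hz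
  have hzim : z.im = Real.sqrt 3 / 2 := by simp [hz]
  have hzim0 : 0 < z.im := by
    rw [hzim]; positivity
  obtain ⟨w, hw⟩ := IsAlgClosed.exists_pow_nat_eq z (n := 2) (by norm_num)
  have hwim : w.im ≠ 0 := by
    intro h0
    have : (w ^ 2).im = 0 := by
      rw [sq, Complex.mul_im, h0]; ring
    rw [hw] at this
    exact hzim0.ne' this
  have hu : (k : ℂ) ^ 2 * ((cs : ℂ) ^ 2 - 1) = 1 := by
    rw [hk2]
    have : ((cs : ℂ) ^ 2 - 1) = ((t : ℝ) : ℂ) := by push_cast [ht]; ring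
    rw [this]
    push_cast
    exact inv_mul_cancel₀ htc
  have hs3 : ((Real.sqrt 3 : ℝ) : ℂ) ^ 2 = 3 := by
    norm_cast
    exact Real.sq_sqrt (by norm_num)
  have hr : ((1/2 + t⁻¹ : ℝ) : ℂ) = (k : ℂ) ^ 2 + 1/2 := by
    rw [hk2]; push_cast; ring
  have hI : (Complex.I) ^ 2 = -1 := Complex.I_sq
  have hs : (((Real.sqrt 3 : ℝ) : ℂ) * Complex.I) ^ 2 = -3 := by
    rw [mul_pow, hs3, hI]; ring
  have hb : ((Real.sqrt 3 / 2 : ℝ) : ℂ) = ((Real.sqrt 3 : ℝ) : ℂ) / 2 := by push_cast; ring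
  have key : (z - (k : ℂ) ^ 2) ^ 2 - z + (cs : ℂ) ^ 2 * (k : ℂ) ^ 2 = 0 := by
    rw [hz, hr, hb]
    linear_combination (1/4 : ℂ) * hs + hu
  rcases lt_or_gt_of_ne hwim with hneg | hpos
  · exact ⟨k, -w, by rw [neg_sq, hw]; exact key, by simpa using hneg⟩
  · exact ⟨k, w, by rw [hw]; exact key, hpos⟩
end

section
/- Suppose ω: ℂ → ℂ satisfies ω(k) = k - i D k² + E(k) with D ∈ ℝ, D ≥ 0, and |E(k)| ≤ C|k|³ for |k| ≤ r (C, r > 0). If Im ω(k) ≤ |Im k| for all complex k with |k| ≤ r, then D = 0. -/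
/-! At `k = iε` the stability bound `Im ω ≤ ε` leaves `D ε² ≤ -Im E(iε) ≤ C ε³`, so `D ≤ C ε`
for every small `ε > 0`, and letting `ε → 0⁺` gives `D ≤ 0`. -/

open Complex Filter Topology

lemma im_ofReal_mul_I_sub_I_mul_sq (ε D : ℝ) :
    ((ε : ℂ) * I - I * D * ((ε : ℂ) * I) ^ 2).im = ε + D * ε ^ 2 := by
  simp [mul_pow, ← ofReal_pow]

lemma nonpos_of_forall_le_mul {a c r : ℝ} (hr : 0 < r)
    (h : ∀ ε : ℝ, 0 < ε → ε ≤ r → a ≤ c * ε) : a ≤ 0 := by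
  have hlim : Tendsto (fun ε : ℝ => c * ε) (𝓝[>] 0) (𝓝 0) := by
    simpa using ((continuous_const_mul c).tendsto 0).mono_left nhdsWithin_le_nhds
  refine ge_of_tendsto hlim ?_
  filter_upwards [self_mem_nhdsWithin, Ioc_mem_nhdsGT hr] with ε hε hεr
  exact h ε hε hεr.2

theorem luminal_sound_no_damping_general (ω E : ℂ → ℂ) (D C r : ℝ)
    (hD : 0 ≤ D) (hr : 0 < r)
    (hexp : ∀ k : ℂ, ‖k‖ ≤ r →
      ω k = k - Complex.I * (D : ℂ) * k ^ 2 + E k)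
    (herr : ∀ k : ℂ, ‖k‖ ≤ r → ‖E k‖ ≤ C * ‖k‖ ^ 3)
    (hstab : ∀ k : ℂ, ‖k‖ ≤ r → (ω k).im ≤ |k.im|) :
    D = 0 := by
  refine le_antisymm (nonpos_of_forall_le_mul (c := C) hr fun ε hε hεr => ?_) hD
  have hnorm : ‖(ε : ℂ) * I‖ = ε := by simp [abs_of_pos hε]
  have hkr : ‖(ε : ℂ) * I‖ ≤ r := hnorm.symm ▸ hεr
  have hstab_ε := hstab _ hkr
  rw [hexp _ hkr, add_im, im_ofReal_mul_I_sub_I_mul_sq, mul_I_im, ofReal_re,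
    abs_of_pos hε] at hstab_ε
  have hE : -(E (ε * I)).im ≤ C * ε ^ 3 :=
    (neg_le_abs _).trans <| (abs_im_le_norm _).trans <| by simpa only [hnorm] using herr _ hkr
  have hquad : D * ε ^ 2 ≤ C * ε * ε ^ 2 := by linarith
  exact le_of_mul_le_mul_right hquad (by positivity)

theorem luminal_sound_no_damping (ω E : ℂ → ℂ) (D C r : ℝ)
    (hD : 0 ≤ D) (hC : 0 < C) (hr : 0 < r)
    (hexp : ∀ k : ℂ, ‖k‖ ≤ r →
      ω k = k - Complex.I * (D : ℂ) * k ^ 2 + E k)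
    (herr : ∀ k : ℂ, ‖k‖ ≤ r → ‖E k‖ ≤ C * ‖k‖ ^ 3)
    (hstab : ∀ k : ℂ, ‖k‖ ≤ r → (ω k).im ≤ |k.im|) :
    D = 0 :=
  luminal_sound_no_damping_general ω E D C r hD hr hexp herr hstab
end

section
/- Let ω: ℂ → ℂ be an entire function satisfying Im ω(k) ≤ |Im k| for all k ∈ ℂ. Then ω is a polynomial of degree at most one. -/
open Metric Set Filter Bornology

/-- Borel–Carathéodory-style bound: an entire function whose real part is bounded by `|Im z|`
grows at most linearly. -/
lemma bc_bound {F : ℂ → ℂ} (hF : Differentiable ℂ F)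
    (hre : ∀ z, (F z).re ≤ |z.im|) {R : ℝ} (hR : 0 < R) {z : ℂ}
    (hz : ‖z‖ ≤ R / 2) : ‖F z - F 0‖ ≤ 2 * (R + 1 - (F 0).re) := by
  set A : ℝ := R + 1 - (F 0).re with hA
  have hF00 : (F 0).re ≤ 0 := by simpa using hre 0
  have hApos : 0 < A := by simp only [hA]; linarith
  set w : ℂ → ℂ := fun x => F x - F 0 with hw
  set d : ℂ → ℂ := fun x => 2 * (A : ℂ) - w x with hd
  have hwre : ∀ x ∈ ball (0 : ℂ) R, (w x).re < A := by
    intro x hx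
    have h1 : |x.im| ≤ ‖x‖ := Complex.abs_im_le_norm x
    have h2 : ‖x‖ < R := by
      simpa [Complex.dist_eq] using mem_ball.1 hx
    have h3 := hre x
    simp only [hw, Complex.sub_re, hA]
    linarith
  have hdre : ∀ x ∈ ball (0 : ℂ) R, 0 < (d x).re := by
    intro x hx
    have := hwre x hx
    simp only [hd, Complex.sub_re, Complex.mul_re, Complex.ofReal_re, Complex.ofReal_im]
    norm_num
    linarith
  have hdne : ∀ x ∈ ball (0 : ℂ) R, d x ≠ 0 := by
    intro x hx h0
    have := hdre x hx
    rw [h0] at this; simp at this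
  set g : ℂ → ℂ := fun x => w x / d x with hg
  have hg0 : g 0 = 0 := by simp [hg, hw]
  have hwd : Differentiable ℂ w := hF.sub_const _
  have hgd : DifferentiableOn ℂ g (ball 0 R) := by
    apply DifferentiableOn.div
    · exact hwd.differentiableOn
    · exact ((differentiable_const _).sub hwd).differentiableOn
    · exact hdne
  have hmaps : MapsTo g (ball 0 R) (ball (g 0) 1) := by
    intro x hx
    rw [hg0, mem_ball, dist_zero_right]
    have habs : ‖w x‖ < ‖d x‖ := by
      have hsq : Complex.normSq (w x) < Complex.normSq (d x) := by
        have h1 := hwre x hx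
        have hdr : (d x).re = 2 * A - (w x).re := by
          simp only [hd, Complex.sub_re, Complex.mul_re, Complex.ofReal_re, Complex.ofReal_im]
          norm_num
        have hdi : (d x).im = -(w x).im := by
          simp only [hd, Complex.sub_im, Complex.mul_im, Complex.ofReal_re, Complex.ofReal_im]
          norm_num
        simp only [Complex.normSq_apply, hdr, hdi]
        nlinarith
      have := Real.sqrt_lt_sqrt (Complex.normSq_nonneg _) hsq
      simpa [Complex.norm_def] using this
    have hdpos : 0 < ‖d x‖ := lt_of_le_of_lt (norm_nonneg _) habs
    simp only [hg, norm_div]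
    rw [div_lt_one hdpos]
    exact habs
  have hz' : z ∈ ball (0 : ℂ) R := by
    rw [mem_ball, Complex.dist_eq, sub_zero]
    linarith
  have hS := Complex.dist_le_div_mul_dist_of_mapsTo_ball hgd (hmaps.mono_right ball_subset_closedBall) hz'
  have hgz : ‖g z‖ ≤ 1 / 2 := by
    rw [hg0, Complex.dist_eq, sub_zero, Complex.dist_eq, sub_zero] at hS
    calc ‖g z‖ ≤ 1 / R * ‖z‖ := hS
      _ ≤ 1 / R * (R / 2) := by
          apply mul_le_mul_of_nonneg_left hz
          positivity
      _ = 1 / 2 := by field_simp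
  have hw_eq : w z = g z * d z := by
    rw [hg, div_mul_cancel₀]
    exact hdne z hz'
  have hkey : ‖w z‖ ≤ 1 / 2 * (2 * A + ‖w z‖) := by
    calc ‖w z‖ = ‖g z‖ * ‖d z‖ := by
          rw [hw_eq, norm_mul]
      _ ≤ 1 / 2 * ‖d z‖ := by
          apply mul_le_mul_of_nonneg_right hgz (norm_nonneg _)
      _ ≤ 1 / 2 * (2 * A + ‖w z‖) := by
          apply mul_le_mul_of_nonneg_left _ (by norm_num)
          calc ‖d z‖ ≤ ‖2 * (A : ℂ)‖ + ‖w z‖ := by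
                simpa using norm_sub_le (2 * (A : ℂ)) (w z)
            _ = 2 * A + ‖w z‖ := by
                rw [norm_mul]
                simp [abs_of_pos hApos]
  have : ‖w z‖ ≤ 2 * A := by linarith
  simpa [hw] using this

/-- The derivative of such a function is uniformly bounded. -/
lemma deriv_bound {F : ℂ → ℂ} (hF : Differentiable ℂ F)
    (hre : ∀ z, (F z).re ≤ |z.im|) (c : ℂ) : ‖deriv F c‖ ≤ 4 := by
  set B : ℝ := ‖F 0‖ + 2 - 2 * (F 0).re + 4 * ‖c‖ with hB
  have key : ∀ r : ℝ, 0 < r → ‖deriv F c‖ ≤ (B + 4 * r) / r := by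
    intro r hr
    apply Complex.norm_deriv_le_of_forall_mem_sphere_norm_le hr hF.diffContOnCl
    intro x hx
    have hxc : ‖x - c‖ = r := by simpa [Complex.dist_eq] using hx
    have hxb : ‖x‖ ≤ ‖c‖ + r := by
      calc ‖x‖ = ‖x - c + c‖ := by ring_nf
        _ ≤ ‖x - c‖ + ‖c‖ := norm_add_le _ _
        _ = ‖c‖ + r := by rw [hxc]; ring
    have hR : (0 : ℝ) < 2 * (‖c‖ + r) := by positivity
    have hxb2 : ‖x‖ ≤ 2 * (‖c‖ + r) / 2 := by linarith
    have hbc := bc_bound hF hre hR hxb2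
    have h1 : ‖F x‖ ≤ ‖F 0‖ + ‖F x - F 0‖ := by
      calc ‖F x‖ = ‖F 0 + (F x - F 0)‖ := by ring_nf
        _ ≤ ‖F 0‖ + ‖F x - F 0‖ := norm_add_le _ _
    calc ‖F x‖ ≤ ‖F 0‖ + 2 * (2 * (‖c‖ + r) + 1 - (F 0).re) := by linarith
      _ = B + 4 * r := by rw [hB]; ring
  have hlim : Tendsto (fun r : ℝ => (B + 4 * r) / r) atTop (nhds 4) := by
    have h1 : Tendsto (fun r : ℝ => B * r⁻¹ + 4) atTop (nhds 4) := by
      have := (tendsto_inv_atTop_zero.const_mul B).add (tendsto_const_nhds (x := (4 : ℝ)))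
      simpa using this
    apply h1.congr'
    filter_upwards [eventually_gt_atTop (0 : ℝ)] with r hr
    field_simp
  apply ge_of_tendsto hlim
  filter_upwards [eventually_gt_atTop (0 : ℝ)] with r hr
  exact key r hr

theorem entire_dispersion_is_affine (ω : ℂ → ℂ) (hω : Differentiable ℂ ω)
    (hbound : ∀ k : ℂ, (ω k).im ≤ |k.im|) :
    ∃ a b : ℂ, ∀ k : ℂ, ω k = a + b * k := by
  set F : ℂ → ℂ := fun z => -Complex.I * ω z with hFdef
  have hF : Differentiable ℂ F := hω.const_mul _
  have hre : ∀ z, (F z).re ≤ |z.im| := by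
    intro z
    have := hbound z
    simp only [hFdef, Complex.mul_re, Complex.neg_re, Complex.I_re, Complex.neg_im,
      Complex.I_im]
    simpa using this
  have hb4 : ∀ c, ‖deriv F c‖ ≤ 4 := deriv_bound hF hre
  have hdF : Differentiable ℂ (deriv F) := by
    have h1 : AnalyticOnNhd ℂ F univ := Complex.analyticOnNhd_univ_iff_differentiable.mpr hF
    exact Complex.analyticOnNhd_univ_iff_differentiable.mp h1.deriv
  have hbdd : IsBounded (range (deriv F)) := by
    apply isBounded_iff_forall_norm_le.2 ⟨4, ?_⟩
    rintro _ ⟨c, rfl⟩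
    exact hb4 c
  have hconst : ∀ z : ℂ, deriv F z = deriv F 0 := fun z =>
    hdF.apply_eq_apply_of_bounded hbdd z 0
  -- deriv F z = -I * deriv ω z
  have hderivF : ∀ z : ℂ, deriv F z = -Complex.I * deriv ω z := by
    intro z
    simp only [hFdef]
    rw [deriv_const_mul _ (hω z)]
  have hderivω : ∀ z : ℂ, deriv ω z = deriv ω 0 := by
    intro z
    have h1 := hconst z
    rw [hderivF z, hderivF 0] at h1
    exact mul_left_cancel₀ (by simp [Complex.I_ne_zero]) h1
  refine ⟨ω 0, deriv ω 0, fun k => ?_⟩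
  set b : ℂ := deriv ω 0 with hb
  set h : ℂ → ℂ := fun z => ω z - b * z with hh
  have hhd : Differentiable ℂ h := hω.sub (differentiable_id.const_mul b)
  have hh0 : ∀ z, deriv h z = 0 := by
    intro z
    have h1 : HasDerivAt h (deriv ω z - b * 1) z :=
      ((hω z).hasDerivAt).sub ((hasDerivAt_id z).const_mul b)
    rw [h1.deriv, hderivω z]
    ring
  have := is_const_of_deriv_eq_zero hhd hh0 k 0
  simp only [hh] at this
  have h2 : ω k - b * k = ω 0 := by simpa using this
  linear_combination h2
end
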